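/- Let T_Γ = (V,E) be a linkage type. For every rectifiable continuous path γ : [0,1] → (ℝ^d)^V with γ((0,1]) ⊆ Emb(T_Γ) and every sequence (t_i) in (0,1] with t_i → 0, the sequence (γ(t_i)) is a Cauchy sequence in (Emb(T_Γ), d_path), and the point φ(γ) ∈ Êmb(T_Γ) it represents is independent of the choice of the sequence (t_i). Moreover, the resulting map φ, from the set of all such rectifiable paths to Êmb(T_Γ), is surjective. -/

import Mathlib

open scoped RealInnerProductSpace ENNReal
open Set Filter

noncomputable section

abbrev Pt (d : ℕ) := EuclideanSpace ℝ (Fin d)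
abbrev Conf (V : Type*) [Fintype V] (d : ℕ) := PiLp 2 (fun _ : V => Pt d)

def closedSeg {V : Type*} {d : ℕ} (x : V → Pt d) (e : Sym2 V) : Set (Pt d) :=
  Sym2.lift ⟨fun u v => segment ℝ (x u) (x v), fun u v => segment_symm ℝ (x u) (x v)⟩ e

def openSeg {V : Type*} {d : ℕ} (x : V → Pt d) (e : Sym2 V) : Set (Pt d) :=
  Sym2.lift ⟨fun u v => openSegment ℝ (x u) (x v), fun u v => openSegment_symm ℝ (x u) (x v)⟩ e

def edgeLen {V : Type*} {d : ℕ} (x : V → Pt d) (e : Sym2 V) : ℝ :=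
  Sym2.lift ⟨fun u v => dist (x u) (x v), fun u v => dist_comm (x u) (x v)⟩ e

structure LinkageType (V : Type*) [Fintype V] where
  E : Finset (Sym2 V)
  not_diag : ∀ e ∈ E, ¬ e.IsDiag

def IsLinkEmbedding {V : Type*} [Fintype V] {d : ℕ} (T : LinkageType V) (x : V → Pt d) : Prop :=
  Function.Injective x ∧
  ∀ e ∈ T.E, ∀ e' ∈ T.E, e ≠ e' →
    openSeg x e ∩ openSeg x e' = ∅ ∧
    ∀ p ∈ closedSeg x e ∩ closedSeg x e', ∃ v, v ∈ e ∧ v ∈ e' ∧ x v = p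

def EmbSet {V : Type*} [Fintype V] (T : LinkageType V) (d : ℕ) : Set (Conf V d) :=
  {x | IsLinkEmbedding T x}

def CimmSet {V : Type*} [Fintype V] (T : LinkageType V) (d : ℕ) (ℓ : Sym2 V → ℝ) :
    Set (Conf V d) := {x | ∀ e ∈ T.E, edgeLen x e = ℓ e}

def CSet {V : Type*} [Fintype V] (T : LinkageType V) (d : ℕ) (ℓ : Sym2 V → ℝ) :
    Set (Conf V d) := CimmSet T d ℓ ∩ EmbSet T d

def pathInf {X : Type*} [EMetricSpace X] (S : Set X) (x y : X) : ℝ≥0∞ :=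
  ⨅ (γ : ℝ → X) (_ : ContinuousOn γ (Set.Icc 0 1)) (_ : γ 0 = x) (_ : γ 1 = y)
    (_ : Set.MapsTo γ (Set.Icc 0 1) S), eVariationOn γ (Set.Icc 0 1)

def dpath {X : Type*} [EMetricSpace X] (S : Set X) (x y : X) : ℝ :=
  (min (pathInf S x y) 1).toReal

structure ModelsPathMetric {α : Type*} [EMetricSpace α] (S : Set α) (X : Type*)
    [MetricSpace X] (e : X → α) : Prop where
  bij : Set.BijOn e Set.univ S
  dist_eq : ∀ a b : X, dist a b = dpath S (e a) (e b)

/-!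
For `0 < s ≤ t ≤ 1` the restriction of `γ` to `[s, t]` is a path in `Emb` from `γ s` to `γ t`, so
`d_path (γ s, γ t)` is at most the variation of `γ` on `[s, t]`. Read in the completion, `γ` thus
has bounded variation on `(0, 1]`, hence a limit at `0`; this gives the Cauchy property and the
independence of the sequence at once.

For surjectivity, approximate a point of the completion by `x i ∈ Emb` with
`d_path (x i, x (i + 1)) < 2⁻ⁱ`, join consecutive points by paths of length `< 2⁻ⁱ` in `Emb`,
and run the `i`-th path on `[2⁻ⁱ⁻¹, 2⁻ⁱ]`. The concatenation has finite length, and giving it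
at `0` the value of its right limit there makes it continuous.
-/

section PathInf

variable {α : Type*} [EMetricSpace α] {S : Set α}

theorem pathInf_le_eVariationOn {γ : ℝ → α} (hγ : ContinuousOn γ (Icc 0 1))
    (hS : MapsTo γ (Icc 0 1) S) : pathInf S (γ 0) (γ 1) ≤ eVariationOn γ (Icc 0 1) :=
  iInf_le_of_le γ <| iInf_le_of_le hγ <| iInf_le_of_le rfl <| iInf_le_of_le rfl <|
    iInf_le_of_le hS le_rfl

theorem pathInf_le_eVariationOn_Icc {γ : ℝ → α} {a b : ℝ} (hab : a ≤ b)
    (hγ : ContinuousOn γ (Icc a b)) (hS : MapsTo γ (Icc a b) S) :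
    pathInf S (γ a) (γ b) ≤ eVariationOn γ (Icc a b) := by
  set φ : ℝ → ℝ := fun r => a + r * (b - a)
  have hφ : MonotoneOn φ (Icc 0 1) := fun r _ s _ hrs => by
    simp only [φ]; nlinarith
  have hφmaps : MapsTo φ (Icc 0 1) (Icc a b) := fun r hr => by
    simp only [φ, mem_Icc] at hr ⊢; constructor <;> nlinarith
  have h := pathInf_le_eVariationOn (S := S) (hγ.comp (by fun_prop) hφmaps) (hS.comp hφmaps)
  simp only [Function.comp_apply, φ, zero_mul, add_zero, one_mul, add_sub_cancel] at h
  exact h.trans (eVariationOn.comp_le_of_monotoneOn γ φ hφ hφmaps)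

theorem exists_path_of_pathInf_lt {x y : α} {r : ℝ≥0∞} (h : pathInf S x y < r) :
    ∃ γ : ℝ → α, ContinuousOn γ (Icc 0 1) ∧ γ 0 = x ∧ γ 1 = y ∧ MapsTo γ (Icc 0 1) S ∧
      eVariationOn γ (Icc 0 1) < r := by
  simpa only [pathInf, iInf_lt_iff, exists_prop] using h

end PathInf

section Variation

variable {α E F : Type*} [LinearOrder α] [PseudoEMetricSpace E] [PseudoEMetricSpace F]

theorem eVariationOn_le_of_edist_le {f : α → E} {g : α → F} {s : Set α}
    (h : ∀ a ∈ s, ∀ b ∈ s, a ≤ b → edist (f a) (f b) ≤ eVariationOn g (s ∩ Icc a b)) :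
    eVariationOn f s ≤ eVariationOn g s := by
  refine iSup_le fun ⟨n, u, hu, us⟩ => ?_
  calc ∑ i ∈ Finset.range n, edist (f (u (i + 1))) (f (u i))
      ≤ ∑ i ∈ Finset.range n, eVariationOn g (s ∩ Icc (u i) (u (i + 1))) :=
        Finset.sum_le_sum fun i _ =>
          edist_comm (f (u i)) _ ▸ h _ (us i) _ (us (i + 1)) (hu i.le_succ)
    _ = eVariationOn g (s ∩ Icc (u 0) (u n)) := eVariationOn.sum g hu fun i _ _ => us i
    _ ≤ eVariationOn g s := eVariationOn.mono g inter_subset_left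

theorem eVariationOn_Ioc_le_of_forall_Icc {f : α → E} {a b : α} {C : ℝ≥0∞}
    (h : ∀ c ∈ Ioc a b, eVariationOn f (Icc c b) ≤ C) : eVariationOn f (Ioc a b) ≤ C :=
  iSup_le fun ⟨n, u, hu, us⟩ =>
    (eVariationOn.sum_le (s := Icc (u 0) b) (n := n) hu
      fun i => ⟨hu (Nat.zero_le i), (us i).2⟩).trans (h (u 0) (us 0))

end Variation

section DyadicConcat

def dyadicIndex (t : ℝ) : ℕ := sInf {n | (2⁻¹ : ℝ) ^ (n + 1) < t}

theorem dyadicIndex_eq {t : ℝ} {i : ℕ} (ht : t ∈ Ioc ((2⁻¹ : ℝ) ^ (i + 1)) (2⁻¹ ^ i)) :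
    dyadicIndex t = i := by
  refine le_antisymm (Nat.sInf_le ht.1) (le_csInf ⟨i, ht.1⟩ fun m hm => ?_)
  by_contra! hmi
  exact not_lt.2 (ht.2.trans (pow_le_pow_of_le_one (by norm_num) (by norm_num) hmi)) hm

theorem mem_Ioc_dyadicIndex {t : ℝ} (ht : t ∈ Ioc (0 : ℝ) 1) :
    t ∈ Ioc ((2⁻¹ : ℝ) ^ (dyadicIndex t + 1)) (2⁻¹ ^ dyadicIndex t) := by
  obtain ⟨n, hn⟩ := exists_pow_lt_of_lt_one ht.1 (by norm_num : (2⁻¹ : ℝ) < 1)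
  have hne : {n | (2⁻¹ : ℝ) ^ (n + 1) < t}.Nonempty :=
    ⟨n, (pow_le_pow_of_le_one (by norm_num) (by norm_num) n.le_succ).trans_lt hn⟩
  refine ⟨Nat.sInf_mem hne, ?_⟩
  cases h : dyadicIndex t with
  | zero => simpa using ht.2
  | succ m => exact not_lt.1 (Nat.notMem_of_lt_sInf (h ▸ m.lt_succ_self : m < dyadicIndex t))

theorem two_sub_two_pow_mul_mem_Icc {i : ℕ} {t : ℝ}
    (ht : t ∈ Icc ((2⁻¹ : ℝ) ^ (i + 1)) (2⁻¹ ^ i)) : 2 - 2 ^ (i + 1) * t ∈ Icc (0 : ℝ) 1 := by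
  have h1 : (2 : ℝ) ^ (i + 1) * 2⁻¹ ^ (i + 1) = 1 := by rw [← mul_pow]; norm_num
  have h2 : (2 : ℝ) ^ (i + 1) * 2⁻¹ ^ i = 2 := by rw [pow_succ, mul_right_comm, ← mul_pow]; norm_num
  have := mul_le_mul_of_nonneg_left ht.1 (pow_nonneg zero_le_two (i + 1))
  have := mul_le_mul_of_nonneg_left ht.2 (pow_nonneg zero_le_two (i + 1))
  constructor <;> linarith

variable {E : Type*}

def dyadicConcat (g : ℕ → ℝ → E) (c : E) (t : ℝ) : E :=
  if 0 < t then g (dyadicIndex t) (2 - 2 ^ (dyadicIndex t + 1) * t) else c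

variable {g : ℕ → ℝ → E} {c : E}

theorem dyadicConcat_eqOn (hg_link : ∀ i, g i 1 = g (i + 1) 0) (i : ℕ) :
    EqOn (dyadicConcat g c) (fun t => g i (2 - 2 ^ (i + 1) * t))
      (Icc ((2⁻¹ : ℝ) ^ (i + 1)) (2⁻¹ ^ i)) := by
  intro t ht
  have hpos : 0 < t := lt_of_lt_of_le (by positivity) ht.1
  rcases ht.1.eq_or_lt with rfl | hlt
  · have hidx : dyadicIndex ((2⁻¹ : ℝ) ^ (i + 1)) = i + 1 :=
      dyadicIndex_eq ⟨pow_lt_pow_right_of_lt_one₀ (by norm_num) (by norm_num) (i + 1).lt_succ_self,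
        le_rfl⟩
    have h1 : (2 : ℝ) ^ (i + 1) * 2⁻¹ ^ (i + 1) = 1 := by rw [← mul_pow]; norm_num
    have h2 : (2 : ℝ) ^ (i + 1 + 1) * 2⁻¹ ^ (i + 1) = 2 := by
      rw [pow_succ, mul_right_comm, h1]; norm_num
    simp only [dyadicConcat, if_pos hpos, hidx, h1, h2, sub_self]
    norm_num [hg_link i]
  · simp only [dyadicConcat, if_pos hpos, dyadicIndex_eq ⟨hlt, ht.2⟩]

theorem dyadicConcat_inv_two_pow (hg_link : ∀ i, g i 1 = g (i + 1) 0) (i : ℕ) :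
    dyadicConcat g c ((2⁻¹ : ℝ) ^ i) = g i 0 := by
  have h : (2 : ℝ) ^ (i + 1) * 2⁻¹ ^ i = 2 := by rw [pow_succ, mul_right_comm, ← mul_pow]; norm_num
  have hmem : (2⁻¹ : ℝ) ^ i ∈ Icc ((2⁻¹ : ℝ) ^ (i + 1)) (2⁻¹ ^ i) :=
    ⟨pow_le_pow_of_le_one (by norm_num) (by norm_num) i.le_succ, le_rfl⟩
  rw [dyadicConcat_eqOn hg_link i hmem]
  simp only [h, sub_self]

variable [PseudoEMetricSpace E]

theorem continuousOn_dyadicConcat_Icc (hg_cont : ∀ i, ContinuousOn (g i) (Icc 0 1))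
    (hg_link : ∀ i, g i 1 = g (i + 1) 0) (n : ℕ) :
    ContinuousOn (dyadicConcat g c) (Icc ((2⁻¹ : ℝ) ^ n) 1) := by
  induction n with
  | zero => simp
  | succ n ih =>
    rw [← Icc_union_Icc_eq_Icc (pow_le_pow_of_le_one (by norm_num) (by norm_num) n.le_succ)
      (pow_le_one₀ (by norm_num) (by norm_num))]
    refine ContinuousOn.union_of_isClosed ?_ ih isClosed_Icc isClosed_Icc
    exact ((hg_cont n).comp (by fun_prop) fun t ht => two_sub_two_pow_mul_mem_Icc ht).congr
      (dyadicConcat_eqOn hg_link n)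

theorem eVariationOn_dyadicConcat_Icc_le (hg_link : ∀ i, g i 1 = g (i + 1) 0) (n : ℕ) :
    eVariationOn (dyadicConcat g c) (Icc ((2⁻¹ : ℝ) ^ n) 1) ≤
      ∑ i ∈ Finset.range n, eVariationOn (g i) (Icc 0 1) := by
  induction n with
  | zero => simp [eVariationOn.subsingleton]
  | succ n ih =>
    have hpiece : eVariationOn (dyadicConcat g c) (Icc ((2⁻¹ : ℝ) ^ (n + 1)) (2⁻¹ ^ n)) ≤
        eVariationOn (g n) (Icc 0 1) := by
      rw [eVariationOn.congr (dyadicConcat_eqOn hg_link n)]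
      refine eVariationOn.comp_le_of_antitoneOn (g n) _ (fun s _ t _ hst => ?_)
        fun t ht => two_sub_two_pow_mul_mem_Icc ht
      have := mul_le_mul_of_nonneg_left hst (pow_nonneg zero_le_two (n + 1))
      linarith
    have hsplit := eVariationOn.Icc_add_Icc (dyadicConcat g c) (s := univ)
      (pow_le_pow_of_le_one (by norm_num : (0 : ℝ) ≤ 2⁻¹) (by norm_num) n.le_succ)
      (pow_le_one₀ (by norm_num) (by norm_num)) (mem_univ _)
    simp only [univ_inter] at hsplit
    rw [← hsplit, Finset.sum_range_succ, add_comm]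
    exact add_le_add ih hpiece

theorem exists_concat_of_tsum_eVariationOn_ne_top [CompleteSpace E]
    (hg_cont : ∀ i, ContinuousOn (g i) (Icc 0 1))
    (hg_link : ∀ i, g i 1 = g (i + 1) 0) (hg_var : ∑' i, eVariationOn (g i) (Icc 0 1) ≠ ⊤) :
    ∃ Γ : ℝ → E, ContinuousOn Γ (Icc 0 1) ∧ eVariationOn Γ (Icc 0 1) ≠ ⊤ ∧
      MapsTo Γ (Ioc 0 1) (⋃ i, g i '' Icc 0 1) ∧ ∀ i, Γ ((2⁻¹ : ℝ) ^ i) = g i 0 := by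
  have hvar : ∀ c, eVariationOn (dyadicConcat g c) (Ioc 0 1) ≤
      ∑' i, eVariationOn (g i) (Icc 0 1) := fun c =>
    eVariationOn_Ioc_le_of_forall_Icc fun s hs =>
      (eVariationOn.mono _ (Icc_subset_Icc_left (mem_Ioc_dyadicIndex hs).1.le)).trans
        ((eVariationOn_dyadicConcat_Icc_le hg_link _).trans (ENNReal.sum_le_tsum _))
  -- On `(0, 1]`, `dyadicConcat g c` does not depend on `c`, so its right limit at `0`
  -- can serve as `c`.
  obtain ⟨l, hl⟩ := BoundedVariationOn.exists_tendsto_right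
    (ne_top_of_le_ne_top hg_var (hvar (g 0 0))) (0 : ℝ)
  rw [inter_eq_left.2 Ioc_subset_Ioi_self, nhdsWithin_Ioc_eq_nhdsGT one_pos] at hl
  have hcont₀ : ContinuousWithinAt (dyadicConcat g l) (Ici 0) 0 := by
    refine continuousWithinAt_Ioi_iff_Ici.1 ?_
    simp only [ContinuousWithinAt, dyadicConcat, lt_irrefl, if_false]
    exact hl.congr' (eventually_nhdsWithin_of_forall fun t (ht : 0 < t) => by
      simp [dyadicConcat, ht])
  refine ⟨dyadicConcat g l, fun t ht => ?_, ?_, fun t ht => ?_, dyadicConcat_inv_two_pow hg_link⟩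
  · rcases ht.1.eq_or_lt with rfl | hpos
    · exact hcont₀.mono Icc_subset_Ici_self
    · have hmem := mem_Ioc_dyadicIndex ⟨hpos, ht.2⟩
      refine ((continuousOn_dyadicConcat_Icc hg_cont hg_link _) t ⟨hmem.1.le, ht.2⟩)
        |>.mono_of_mem_nhdsWithin ?_
      exact mem_nhdsWithin.2 ⟨Ioi _, isOpen_Ioi, hmem.1, fun y hy => ⟨hy.1.le, hy.2.2⟩⟩
  · rw [← eVariationOn.eVariationOn_Ioc_eq_Icc_of_continuousWithinAt hcont₀]
    exact ne_top_of_le_ne_top hg_var (hvar l)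
  · have hmem := mem_Ioc_dyadicIndex ht
    simp only [dyadicConcat, if_pos ht.1]
    exact mem_iUnion.2 ⟨_, _, two_sub_two_pow_mul_mem_Icc ⟨hmem.1.le, hmem.2⟩, rfl⟩

end DyadicConcat

namespace ModelsPathMetric

open UniformSpace Topology

variable {α X : Type*} [EMetricSpace α] [MetricSpace X] {S : Set α} {e : X → α}

theorem edist_eq (hm : ModelsPathMetric S X e) (a b : X) :
    edist a b = min (pathInf S (e a) (e b)) 1 := by
  rw [edist_dist, hm.dist_eq, dpath,
    ENNReal.ofReal_toReal (min_lt_of_right_lt ENNReal.one_lt_top).ne]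

theorem edist_le_pathInf (hm : ModelsPathMetric S X e) (a b : X) :
    edist a b ≤ pathInf S (e a) (e b) :=
  hm.edist_eq a b ▸ min_le_left _ _

theorem exists_path_of_edist_lt (hm : ModelsPathMetric S X e) {a b : X} {r : ℝ≥0∞}
    (hr : r ≤ 1) (h : edist a b < r) :
    ∃ γ : ℝ → α, ContinuousOn γ (Icc 0 1) ∧ γ 0 = e a ∧ γ 1 = e b ∧
      MapsTo γ (Icc 0 1) S ∧ eVariationOn γ (Icc 0 1) < r := by
  rw [hm.edist_eq] at h
  exact exists_path_of_pathInf_lt ((min_lt_iff.1 h).resolve_right (hr.trans_lt' · |>.false))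

theorem apply_invFun [Nonempty X] (hm : ModelsPathMetric S X e) {x : α} (hx : x ∈ S) :
    e (Function.invFun e x) = x :=
  Function.invFun_eq (by simpa using hm.bij.surjOn hx)

theorem eq_invFun [Nonempty X] (hm : ModelsPathMetric S X e) {a : X} {x : α} (h : e a = x) :
    a = Function.invFun e x :=
  hm.bij.injOn (mem_univ _) (mem_univ _)
    (h.trans (hm.apply_invFun (h ▸ hm.bij.mapsTo (mem_univ a))).symm)

theorem exists_tendsto_completion [Nonempty X] (hm : ModelsPathMetric S X e) {γ : ℝ → α}
    (hγc : ContinuousOn γ (Icc 0 1)) (hγS : MapsTo γ (Ioc 0 1) S)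
    (hγv : eVariationOn γ (Icc 0 1) ≠ ⊤) :
    ∃ l : Completion X, ∀ t : ℕ → ℝ, (∀ i, t i ∈ Ioc (0 : ℝ) 1) → Tendsto t atTop (𝓝 0) →
      ∀ u : ℕ → X, (∀ i, e (u i) = γ (t i)) →
        Tendsto (fun i => (u i : Completion X)) atTop (𝓝 l) := by
  set δ : ℝ → Completion X := fun s => ((Function.invFun e (γ s) : X) : Completion X)
  have hδ : eVariationOn δ (Ioc 0 1) ≤ eVariationOn γ (Ioc 0 1) := by
    refine eVariationOn_le_of_edist_le fun a ha b hb hab => ?_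
    have hsub : Icc a b ⊆ Ioc 0 1 := (Icc_subset_Ioc_iff hab).2 ⟨ha.1, hb.2⟩
    rw [inter_eq_right.2 hsub, Completion.edist_eq]
    calc _ ≤ pathInf S (γ a) (γ b) := by
          simpa only [hm.apply_invFun (hγS ha), hm.apply_invFun (hγS hb)] using
            hm.edist_le_pathInf (Function.invFun e (γ a)) (Function.invFun e (γ b))
      _ ≤ _ := pathInf_le_eVariationOn_Icc hab (hγc.mono (hsub.trans Ioc_subset_Icc_self))
          (hγS.mono_left hsub)
  obtain ⟨l, hl⟩ := BoundedVariationOn.exists_tendsto_right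
    (ne_top_of_le_ne_top hγv (hδ.trans (eVariationOn.mono γ Ioc_subset_Icc_self))) (0 : ℝ)
  refine ⟨l, fun t ht ht₀ u hu => ?_⟩
  have hu' : (fun i => (u i : Completion X)) = δ ∘ t :=
    funext fun i => congrArg _ (hm.eq_invFun (hu i))
  rw [hu']
  exact hl.comp (tendsto_nhdsWithin_iff.2 ⟨ht₀, Eventually.of_forall fun i => ⟨ht i, (ht i).1⟩⟩)

theorem exists_path_tendsto [CompleteSpace α] (hm : ModelsPathMetric S X e) (z : Completion X) :
    ∃ γ : ℝ → α, ContinuousOn γ (Icc 0 1) ∧ MapsTo γ (Ioc 0 1) S ∧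
      eVariationOn γ (Icc 0 1) ≠ ⊤ ∧
      ∃ (t : ℕ → ℝ) (u : ℕ → X), (∀ i, t i ∈ Ioc (0 : ℝ) 1) ∧ Tendsto t atTop (𝓝 0) ∧
        (∀ i, e (u i) = γ (t i)) ∧ Tendsto (fun i => (u i : Completion X)) atTop (𝓝 z) := by
  have hε : ∀ i : ℕ, (0 : ℝ≥0∞) < 2⁻¹ ^ (i + 1) := fun i =>
    ENNReal.pow_pos (by norm_num) _
  choose u hu using fun i => EMetric.mem_closure_iff.1 (Completion.denseRange_coe z) _ (hε i)
  choose x hx using fun i => (hu i).1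
  have hstep : ∀ i, edist (x i) (x (i + 1)) < 2⁻¹ ^ i := fun i => by
    rw [← Completion.edist_eq, hx, hx]
    calc edist (u i) (u (i + 1)) ≤ edist z (u i) + edist z (u (i + 1)) :=
          edist_triangle_left _ _ _
      _ < 2⁻¹ ^ (i + 1) + 2⁻¹ ^ (i + 1) :=
          ENNReal.add_lt_add (hu i).2 ((hu (i + 1)).2.trans_le
            (pow_le_pow_of_le_one (by simp) (by simp) (by omega)))
      _ = 2⁻¹ ^ i := by rw [pow_succ, ← div_eq_mul_inv, ENNReal.add_halves]
  choose g hgc hg0 hg1 hgS hgv using fun i =>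
    hm.exists_path_of_edist_lt (pow_le_one₀ (by simp) (by simp)) (hstep i)
  obtain ⟨Γ, hΓc, hΓv, hΓS, hΓpow⟩ := exists_concat_of_tsum_eVariationOn_ne_top hgc
    (fun i => (hg1 i).trans (hg0 (i + 1)).symm)
    (ne_top_of_le_ne_top (by simp) (ENNReal.tsum_le_tsum fun i => (hgv i).le))
  refine ⟨Γ, hΓc, fun t ht => ?_, hΓv, fun i => (2⁻¹ : ℝ) ^ i, x,
    fun i => ⟨by positivity, (pow_le_one₀ (by norm_num) (by norm_num) : (2⁻¹ : ℝ) ^ i ≤ 1)⟩,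
    tendsto_pow_atTop_nhds_zero_of_lt_one (r := (2⁻¹ : ℝ)) (by norm_num) (by norm_num),
    fun i => (hΓpow i).trans (hg0 i) |>.symm, ?_⟩
  · obtain ⟨i, s, hs, hgs⟩ := mem_iUnion.1 (hΓS ht)
    exact hgs ▸ hgS i hs
  · rw [tendsto_iff_edist_tendsto_0]
    refine tendsto_of_tendsto_of_tendsto_of_le_of_le tendsto_const_nhds
      ((ENNReal.tendsto_pow_atTop_nhds_zero_of_lt_one (r := 2⁻¹) (by norm_num)).comp
        (tendsto_add_atTop_nat 1)) (fun _ => by simp) fun i => ?_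
    simpa [hx, edist_comm] using (hu i).2.le

end ModelsPathMetric

theorem stmt18_general {V : Type} [Fintype V] (T : LinkageType V) (d : ℕ)
    (X : Type) [MetricSpace X] (e : X → Conf V d)
    (hm : ModelsPathMetric (EmbSet T d) X e) :
    (∀ γ : ℝ → Conf V d, ContinuousOn γ (Set.Icc 0 1) →
      Set.MapsTo γ (Set.Ioc 0 1) (EmbSet T d) → eVariationOn γ (Set.Icc 0 1) ≠ ⊤ →
      ((∀ t : ℕ → ℝ, (∀ i, t i ∈ Set.Ioc (0:ℝ) 1) →
          Filter.Tendsto t Filter.atTop (nhds 0) →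
          ∀ u : ℕ → X, (∀ i, e (u i) = γ (t i)) → CauchySeq u) ∧
        (∀ t t' : ℕ → ℝ, (∀ i, t i ∈ Set.Ioc (0:ℝ) 1) →
          Filter.Tendsto t Filter.atTop (nhds 0) →
          (∀ i, t' i ∈ Set.Ioc (0:ℝ) 1) →
          Filter.Tendsto t' Filter.atTop (nhds 0) →
          ∀ u u' : ℕ → X, (∀ i, e (u i) = γ (t i)) → (∀ i, e (u' i) = γ (t' i)) →
          ∀ z z' : UniformSpace.Completion X,
            Filter.Tendsto (fun i => ((u i : X) : UniformSpace.Completion X))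
              Filter.atTop (nhds z) →
            Filter.Tendsto (fun i => ((u' i : X) : UniformSpace.Completion X))
              Filter.atTop (nhds z') →
            z = z'))) ∧
    (∀ z : UniformSpace.Completion X, ∃ γ : ℝ → Conf V d,
      ContinuousOn γ (Set.Icc 0 1) ∧
      Set.MapsTo γ (Set.Ioc 0 1) (EmbSet T d) ∧
      eVariationOn γ (Set.Icc 0 1) ≠ ⊤ ∧
      ∃ (t : ℕ → ℝ) (u : ℕ → X), (∀ i, t i ∈ Set.Ioc (0:ℝ) 1) ∧
        Filter.Tendsto t Filter.atTop (nhds 0) ∧ (∀ i, e (u i) = γ (t i)) ∧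
        Filter.Tendsto (fun i => ((u i : X) : UniformSpace.Completion X))
          Filter.atTop (nhds z)) := by
  refine ⟨fun γ hγc hγS hγv => ⟨fun t ht ht₀ u hu => ?_,
    fun t t' ht ht₀ ht' ht'₀ u u' hu hu' z z' hz hz' => ?_⟩, hm.exists_path_tendsto⟩
  · have : Nonempty X := ⟨u 0⟩
    obtain ⟨l, hl⟩ := hm.exists_tendsto_completion hγc hγS hγv
    exact (UniformSpace.Completion.isUniformInducing_coe X).cauchy_map_iff.1
      (hl t ht ht₀ u hu).cauchySeq
  · have : Nonempty X := ⟨u 0⟩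
    obtain ⟨l, hl⟩ := hm.exists_tendsto_completion hγc hγS hγv
    exact (tendsto_nhds_unique hz (hl t ht ht₀ u hu)).trans
      (tendsto_nhds_unique hz' (hl t' ht' ht'₀ u' hu')).symm

/-- for every rectifiable continuous path `γ : [0,1] → (ℝ^d)^V` with
`γ((0,1]) ⊆ Emb(T_Γ)` and every sequence `t_i → 0` in `(0,1]`, the sequence `γ(t_i)` is
`d_path`-Cauchy; the point of `Êmb(T_Γ)` it represents does not depend on the chosen
sequence; and the resulting map from rectifiable paths to `Êmb(T_Γ)` is surjective.  Here
`X` is an abstract metric space isometrically identified via `e` with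
`(Emb(T_Γ), d_path)`, and `Êmb(T_Γ)` is its completion. -/
theorem stmt18 {V : Type} [Fintype V] (T : LinkageType V) (d : ℕ) (hd : 1 ≤ d)
    (X : Type) [MetricSpace X] (e : X → Conf V d)
    (hm : ModelsPathMetric (EmbSet T d) X e) :
    (∀ γ : ℝ → Conf V d, ContinuousOn γ (Set.Icc 0 1) →
      Set.MapsTo γ (Set.Ioc 0 1) (EmbSet T d) → eVariationOn γ (Set.Icc 0 1) ≠ ⊤ →
      ((∀ t : ℕ → ℝ, (∀ i, t i ∈ Set.Ioc (0:ℝ) 1) →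
          Filter.Tendsto t Filter.atTop (nhds 0) →
          ∀ u : ℕ → X, (∀ i, e (u i) = γ (t i)) → CauchySeq u) ∧
        (∀ t t' : ℕ → ℝ, (∀ i, t i ∈ Set.Ioc (0:ℝ) 1) →
          Filter.Tendsto t Filter.atTop (nhds 0) →
          (∀ i, t' i ∈ Set.Ioc (0:ℝ) 1) →
          Filter.Tendsto t' Filter.atTop (nhds 0) →
          ∀ u u' : ℕ → X, (∀ i, e (u i) = γ (t i)) → (∀ i, e (u' i) = γ (t' i)) →
          ∀ z z' : UniformSpace.Completion X,
            Filter.Tendsto (fun i => ((u i : X) : UniformSpace.Completion X))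
              Filter.atTop (nhds z) →
            Filter.Tendsto (fun i => ((u' i : X) : UniformSpace.Completion X))
              Filter.atTop (nhds z') →
            z = z'))) ∧
    (∀ z : UniformSpace.Completion X, ∃ γ : ℝ → Conf V d,
      ContinuousOn γ (Set.Icc 0 1) ∧
      Set.MapsTo γ (Set.Ioc 0 1) (EmbSet T d) ∧
      eVariationOn γ (Set.Icc 0 1) ≠ ⊤ ∧
      ∃ (t : ℕ → ℝ) (u : ℕ → X), (∀ i, t i ∈ Set.Ioc (0:ℝ) 1) ∧
        Filter.Tendsto t Filter.atTop (nhds 0) ∧ (∀ i, e (u i) = γ (t i)) ∧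
        Filter.Tendsto (fun i => ((u i : X) : UniformSpace.Completion X))
          Filter.atTop (nhds z)) :=
  stmt18_general T d X e hm

end
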